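/- arXiv:1703.02388 — 6 statements merged into one kernel-verified Lean document; each statement's English description precedes it below -/
import Mathlib

section
/- Let u and v be positive integers, s = min(u,v), t = max(u,v), and in ℝ set q₊ = 2 + uv + √(uv(4+uv)) and q₋ = 2 + uv − √(uv(4+uv)). Then for every natural number n, μ(𝒯^{(u,v)}(2n+1)) = √t · ((q₊)^{n+1} − (q₋)^{n+1}) / (2^{n+1} · √(s(4+uv))). -/
open Matrix Finset

def Lm (u : ℕ) : Matrix (Fin 2) (Fin 2) ℕ := !![1, 0; u, 1]
def Rm (v : ℕ) : Matrix (Fin 2) (Fin 2) ℕ := !![1, v; 0, 1]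

/-- The product of the matrices corresponding to a word: `false ↦ L_u`, `true ↦ R_v`. -/
def wordProd (u v : ℕ) (w : List Bool) : Matrix (Fin 2) (Fin 2) ℕ :=
  (w.map (fun b => if b then Rm v else Lm u)).prod

/-- μ of a matrix: maximum of the four entries. -/
def matMax (M : Matrix (Fin 2) (Fin 2) ℕ) : ℕ :=
  max (max (M 0 0) (M 0 1)) (max (M 1 0) (M 1 1))

/-- μ(𝒯^{(u,v)}(I₂;n)): maximum of μ over all products of exactly n matrices each L_u or R_v. -/
def levelMax (u v n : ℕ) : ℕ :=
  Finset.univ.sup (fun w : Fin n → Bool => matMax (wordProd u v (List.ofFn w)))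

/-!
Conjugation by `D = diag(√u, √v)` turns `L_u` and `R_v` into the shears `L_w` and `R_w` with
`w = √(uv)`. A rescaled column of a product of `m` such matrices is therefore the image of a unit
vector under `m` shears, and by induction both of its entries are at most `a (m + 1)` and one of
them at most `a m`, where `a 0 = 0`, `a 1 = 1`, `a (m + 2) = w * a (m + 1) + a m`. Undoing the
scaling costs at most a factor `√(t / s)`. The alternating words `R(LR)ⁿ` and `L(RL)ⁿ` keep the
rescaled column equal to `(a (m + 1), a m)` up to order, so the bound `√(t / s) * a (2n + 2)` is
attained at depth `2n + 1`, and Binet's formula for `a` gives the closed form.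
-/

open Real

@[simp] theorem wordProd_nil (u v : ℕ) : wordProd u v [] = 1 := rfl

@[simp] theorem wordProd_cons (u v : ℕ) (b : Bool) (bs : List Bool) :
    wordProd u v (b :: bs) = (if b then Rm v else Lm u) * wordProd u v bs := by
  simp [wordProd]

theorem le_matMax (M : Matrix (Fin 2) (Fin 2) ℕ) (i j : Fin 2) : M i j ≤ matMax M := by
  fin_cases i <;> fin_cases j <;> simp [matMax]

theorem cast_matMax_le {M : Matrix (Fin 2) (Fin 2) ℕ} {x : ℝ} (h : ∀ i j, (M i j : ℝ) ≤ x) :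
    (matMax M : ℝ) ≤ x := by
  simp only [matMax, Nat.cast_max, max_le_iff]
  exact ⟨⟨h 0 0, h 0 1⟩, h 1 0, h 1 1⟩

theorem matMax_le_levelMax (u v : ℕ) (l : List Bool) :
    matMax (wordProd u v l) ≤ levelMax u v l.length := by
  simpa [levelMax] using Finset.le_sup (f := fun w : Fin l.length → Bool =>
    matMax (wordProd u v (List.ofFn w))) (Finset.mem_univ l.get)

theorem exists_matMax_eq_levelMax (u v n : ℕ) :
    ∃ l : List Bool, l.length = n ∧ matMax (wordProd u v l) = levelMax u v n := by
  obtain ⟨w, -, hw⟩ := Finset.exists_mem_eq_sup Finset.univ Finset.univ_nonempty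
    (fun w : Fin n → Bool => matMax (wordProd u v (List.ofFn w)))
  exact ⟨List.ofFn w, List.length_ofFn, hw.symm⟩

theorem cast_apply_le_levelMax (u v : ℕ) (l : List Bool) (i j : Fin 2) :
    (wordProd u v l i j : ℝ) ≤ levelMax u v l.length :=
  Nat.cast_le.2 ((le_matMax _ i j).trans (matMax_le_levelMax u v l))

noncomputable def shearFib (w : ℝ) : ℕ → ℝ
  | 0 => 0
  | 1 => 1
  | m + 2 => w * shearFib w (m + 1) + shearFib w m

section ShearFib

variable {w : ℝ}

theorem shearFib_nonneg (hw : 0 ≤ w) : ∀ m, 0 ≤ shearFib w m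
  | 0 => le_rfl
  | 1 => zero_le_one
  | m + 2 => by
    have := shearFib_nonneg hw (m + 1)
    have := shearFib_nonneg hw m
    rw [shearFib]; positivity

theorem monotone_shearFib (hw : 1 ≤ w) : Monotone (shearFib w) := by
  refine monotone_nat_of_le_succ fun m => ?_
  have h0 := shearFib_nonneg (zero_le_one.trans hw)
  match m with
  | 0 => simp [shearFib]
  | m + 1 =>
    rw [shearFib]
    nlinarith [h0 m, h0 (m + 1)]

theorem sub_mul_shearFib {α β : ℝ} (hα : α ^ 2 = w * α + 1) (hβ : β ^ 2 = w * β + 1) :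
    ∀ m, (α - β) * shearFib w m = α ^ m - β ^ m
  | 0 => by simp [shearFib]
  | 1 => by simp [shearFib]
  | m + 2 => by
    rw [shearFib, mul_add, mul_left_comm, sub_mul_shearFib hα hβ (m + 1),
      sub_mul_shearFib hα hβ m]
    linear_combination β ^ m * hβ - α ^ m * hα

theorem shearFib_sqrt_two_mul {c : ℝ} (hc : 0 ≤ c) (k : ℕ) :
    shearFib (√c) (2 * k) =
      ((2 + c + √(c * (4 + c))) ^ k - (2 + c - √(c * (4 + c))) ^ k) / (2 ^ k * √(4 + c)) := by
  -- `α, β = (√c ± √(4 + c)) / 2` solve `x ^ 2 = √c * x + 1`; `2α², 2β²` are the bases on the right.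
  rw [sqrt_mul hc]
  set r := √(4 + c)
  have hr : r ^ 2 = 4 + c := sq_sqrt (by positivity)
  have hw : √c ^ 2 = c := sq_sqrt hc
  have hbinet := sub_mul_shearFib (w := √c) (α := (√c + r) / 2) (β := (√c - r) / 2)
    (by linear_combination (hr - hw) / 4) (by linear_combination (hr - hw) / 4) (2 * k)
  rw [pow_mul, pow_mul] at hbinet
  rw [eq_div_iff (by positivity)]
  have hα : 2 * ((√c + r) / 2) ^ 2 = 2 + c + √c * r := by linear_combination (hw + hr) / 2
  have hβ : 2 * ((√c - r) / 2) ^ 2 = 2 + c - √c * r := by linear_combination (hw + hr) / 2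
  rw [← hα, ← hβ, mul_pow, mul_pow, ← mul_sub, ← hbinet]
  ring

end ShearFib

def shearL (w : ℝ) (p : Fin 2 → ℝ) : Fin 2 → ℝ := ![p 0, w * p 0 + p 1]

def shearR (w : ℝ) (p : Fin 2 → ℝ) : Fin 2 → ℝ := ![p 0 + w * p 1, p 1]

def IsShearBounded (w : ℝ) (m : ℕ) (p : Fin 2 → ℝ) : Prop :=
  (∀ i, 0 ≤ p i ∧ p i ≤ shearFib w (m + 1)) ∧ ∃ i, p i ≤ shearFib w m

section IsShearBounded

variable {w : ℝ} {m : ℕ} {p : Fin 2 → ℝ}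

theorem isShearBounded_single (j : Fin 2) : IsShearBounded w 0 (Pi.single j 1) := by
  fin_cases j <;> simp [IsShearBounded, Fin.forall_fin_two, Fin.exists_fin_two, shearFib]

theorem mul_add_le_shearFib (hw : 1 ≤ w) {x y : ℝ} (hx : x ≤ shearFib w (m + 1))
    (hy : y ≤ shearFib w (m + 1)) (hmin : x ≤ shearFib w m ∨ y ≤ shearFib w m) :
    w * x + y ≤ shearFib w (m + 2) := by
  have hmono := monotone_shearFib hw (Nat.le_succ m)
  rw [shearFib]
  rcases hmin with h | h <;> nlinarith

theorem IsShearBounded.shearL (hw : 1 ≤ w) (h : IsShearBounded w m p) :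
    IsShearBounded w (m + 1) (shearL w p) := by
  obtain ⟨hp, hmin⟩ := h
  rw [Fin.exists_fin_two] at hmin
  obtain ⟨⟨h0, h0'⟩, ⟨h1, h1'⟩⟩ := Fin.forall_fin_two.1 hp
  have hmono := monotone_shearFib hw (Nat.le_succ (m + 1))
  refine ⟨Fin.forall_fin_two.2 ⟨⟨h0, h0'.trans hmono⟩, ⟨?_, ?_⟩⟩, 0, h0'⟩
  · exact add_nonneg (mul_nonneg (zero_le_one.trans hw) h0) h1
  · exact mul_add_le_shearFib hw h0' h1' hmin

theorem IsShearBounded.shearR (hw : 1 ≤ w) (h : IsShearBounded w m p) :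
    IsShearBounded w (m + 1) (shearR w p) := by
  obtain ⟨hp, hmin⟩ := h
  rw [Fin.exists_fin_two] at hmin
  obtain ⟨⟨h0, h0'⟩, ⟨h1, h1'⟩⟩ := Fin.forall_fin_two.1 hp
  have hmono := monotone_shearFib hw (Nat.le_succ (m + 1))
  refine ⟨Fin.forall_fin_two.2 ⟨⟨?_, ?_⟩, ⟨h1, h1'.trans hmono⟩⟩, 1, h1'⟩
  · exact add_nonneg h0 (mul_nonneg (zero_le_one.trans hw) h1)
  · exact (add_comm (p 0) _).trans_le (mul_add_le_shearFib hw h1' h0' hmin.symm)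

end IsShearBounded

noncomputable def colWeight (u v : ℕ) : Fin 2 → ℝ := ![√u, √v]

/-- Column `j` of `D M D⁻¹` for `D = diag(√u, √v)`. -/
noncomputable def scaledCol (u v : ℕ) (M : Matrix (Fin 2) (Fin 2) ℕ) (j i : Fin 2) : ℝ :=
  colWeight u v i * M i j / colWeight u v j

section Scaling

variable {u v : ℕ}

theorem colWeight_pos (hu : 1 ≤ u) (hv : 1 ≤ v) (i : Fin 2) : 0 < colWeight u v i := by
  fin_cases i <;> simp [colWeight] <;> omega

theorem sqrt_min_le_colWeight (i : Fin 2) : √(min u v : ℕ) ≤ colWeight u v i := by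
  fin_cases i <;> simp [colWeight]

theorem colWeight_le_sqrt_max (i : Fin 2) : colWeight u v i ≤ √(max u v : ℕ) := by
  fin_cases i <;> simp [colWeight]

theorem scaledCol_one (hu : 1 ≤ u) (hv : 1 ≤ v) (j : Fin 2) :
    scaledCol u v 1 j = Pi.single j 1 := by
  have := (colWeight_pos hu hv j).ne'
  funext i
  by_cases hij : i = j
  · subst hij; simp [scaledCol, this]
  · simp [scaledCol, hij, Matrix.one_apply_ne hij]

theorem scaledCol_Lm_mul (M : Matrix (Fin 2) (Fin 2) ℕ) (j : Fin 2) :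
    scaledCol u v (Lm u * M) j = shearL (√u * √v) (scaledCol u v M j) := by
  have hu : √u * √u = u := mul_self_sqrt (Nat.cast_nonneg u)
  funext i
  simp only [scaledCol, shearL]
  generalize colWeight u v j = d
  fin_cases i <;> simp [colWeight, Lm, Matrix.mul_apply, Fin.sum_univ_two]
  linear_combination (-(√v * M 0 j / d)) * hu

theorem scaledCol_Rm_mul (M : Matrix (Fin 2) (Fin 2) ℕ) (j : Fin 2) :
    scaledCol u v (Rm v * M) j = shearR (√u * √v) (scaledCol u v M j) := by
  have hv : √v * √v = v := mul_self_sqrt (Nat.cast_nonneg v)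
  funext i
  simp only [scaledCol, shearR]
  generalize colWeight u v j = d
  fin_cases i <;> simp [colWeight, Rm, Matrix.mul_apply, Fin.sum_univ_two]
  linear_combination (-(√u * M 1 j / d)) * hv

theorem isShearBounded_scaledCol_wordProd (hu : 1 ≤ u) (hv : 1 ≤ v) (bs : List Bool)
    (j : Fin 2) : IsShearBounded (√u * √v) bs.length (scaledCol u v (wordProd u v bs) j) := by
  have hw : 1 ≤ √u * √v :=
    one_le_mul_of_one_le_of_one_le (one_le_sqrt.2 (by exact_mod_cast hu))
      (one_le_sqrt.2 (by exact_mod_cast hv))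
  induction bs with
  | nil => simpa [scaledCol_one hu hv] using isShearBounded_single j
  | cons b bs ih =>
    cases b
    · simpa [scaledCol_Lm_mul] using ih.shearL hw
    · simpa [scaledCol_Rm_mul] using ih.shearR hw

theorem wordProd_apply_le (hu : 1 ≤ u) (hv : 1 ≤ v) (bs : List Bool) (i j : Fin 2) :
    (wordProd u v bs i j : ℝ) ≤
      √(max u v : ℕ) / √(min u v : ℕ) * shearFib (√u * √v) (bs.length + 1) := by
  have hdi := colWeight_pos hu hv i
  have hdj := colWeight_pos hu hv j
  have hs : 0 < √(min u v : ℕ) := sqrt_pos.2 (by simp; omega)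
  have hbound := ((isShearBounded_scaledCol_wordProd hu hv bs j).1 i).2
  rw [scaledCol, div_le_iff₀ hdj, ← le_div_iff₀' hdi, mul_comm, mul_div_right_comm] at hbound
  refine hbound.trans (mul_le_mul_of_nonneg_right ?_ ?_)
  · exact div_le_div₀ (sqrt_nonneg _) (colWeight_le_sqrt_max j) hs (sqrt_min_le_colWeight i)
  · exact shearFib_nonneg (by positivity) _

end Scaling

theorem shearL_shearFib (w : ℝ) (m : ℕ) :
    shearL w ![shearFib w (m + 1), shearFib w m] = ![shearFib w (m + 1), shearFib w (m + 2)] := by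
  simp [shearL, shearFib]

theorem shearR_shearFib (w : ℝ) (m : ℕ) :
    shearR w ![shearFib w m, shearFib w (m + 1)] = ![shearFib w (m + 2), shearFib w (m + 1)] := by
  simp [shearR, shearFib, add_comm]

def altWord (b : Bool) : ℕ → List Bool
  | 0 => [b]
  | k + 1 => b :: (!b) :: altWord b k

theorem length_altWord (b : Bool) (k : ℕ) : (altWord b k).length = 2 * k + 1 := by
  induction k with
  | zero => rfl
  | succ k ih => simp only [altWord, List.length_cons, ih]; ring

theorem scaledCol_wordProd_altWord_true {u v : ℕ} (hu : 1 ≤ u) (hv : 1 ≤ v) (k : ℕ) :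
    scaledCol u v (wordProd u v (altWord true k)) 1 =
      ![shearFib (√u * √v) (2 * k + 2), shearFib (√u * √v) (2 * k + 1)] := by
  induction k with
  | zero =>
    have : Pi.single 1 1 = ![shearFib (√u * √v) 0, shearFib (√u * √v) 1] := by
      funext i; fin_cases i <;> simp [shearFib]
    rw [altWord, wordProd_cons, if_pos rfl, scaledCol_Rm_mul, wordProd_nil, scaledCol_one hu hv,
      this, shearR_shearFib]
  | succ k ih =>
    rw [altWord, wordProd_cons, wordProd_cons, if_pos rfl, Bool.not_true,
      if_neg Bool.false_ne_true, scaledCol_Rm_mul, scaledCol_Lm_mul, ih, shearL_shearFib,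
      shearR_shearFib]
    rfl

theorem scaledCol_wordProd_altWord_false {u v : ℕ} (hu : 1 ≤ u) (hv : 1 ≤ v) (k : ℕ) :
    scaledCol u v (wordProd u v (altWord false k)) 0 =
      ![shearFib (√u * √v) (2 * k + 1), shearFib (√u * √v) (2 * k + 2)] := by
  induction k with
  | zero =>
    have : Pi.single 0 1 = ![shearFib (√u * √v) 1, shearFib (√u * √v) 0] := by
      funext i; fin_cases i <;> simp [shearFib]
    rw [altWord, wordProd_cons, if_neg Bool.false_ne_true, scaledCol_Lm_mul, wordProd_nil,
      scaledCol_one hu hv, this, shearL_shearFib]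
  | succ k ih =>
    rw [altWord, wordProd_cons, wordProd_cons, if_neg Bool.false_ne_true, Bool.not_false,
      if_pos rfl, scaledCol_Lm_mul, scaledCol_Rm_mul, ih, shearR_shearFib, shearL_shearFib]
    rfl

theorem sqrt_div_sqrt_mul_shearFib_le_levelMax {u v : ℕ} (hu : 1 ≤ u) (hv : 1 ≤ v) (n : ℕ) :
    √(max u v : ℕ) / √(min u v : ℕ) * shearFib (√u * √v) (2 * n + 2) ≤
      levelMax u v (2 * n + 1) := by
  have hu0 : 0 < √(u : ℝ) := sqrt_pos.2 (by exact_mod_cast hu)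
  have hv0 : 0 < √(v : ℝ) := sqrt_pos.2 (by exact_mod_cast hv)
  rcases le_total u v with huv | hvu
  · have hcol := congrFun (scaledCol_wordProd_altWord_true hu hv n) 0
    have hle := cast_apply_le_levelMax u v (altWord true n) 0 1
    simp only [scaledCol, colWeight, Matrix.cons_val_zero, Matrix.cons_val_one] at hcol
    rw [max_eq_right huv, min_eq_left huv, ← hcol, ← length_altWord true n]
    field_simp
    exact hle
  · have hcol := congrFun (scaledCol_wordProd_altWord_false hu hv n) 1
    have hle := cast_apply_le_levelMax u v (altWord false n) 1 0
    simp only [scaledCol, colWeight, Matrix.cons_val_zero, Matrix.cons_val_one] at hcol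
    rw [max_eq_left hvu, min_eq_right hvu, ← hcol, ← length_altWord false n]
    field_simp
    exact hle

theorem levelMax_le {u v : ℕ} (hu : 1 ≤ u) (hv : 1 ≤ v) (m : ℕ) :
    (levelMax u v m : ℝ) ≤ √(max u v : ℕ) / √(min u v : ℕ) * shearFib (√u * √v) (m + 1) := by
  obtain ⟨l, rfl, hl⟩ := exists_matMax_eq_levelMax u v m
  rw [← hl]
  exact cast_matMax_le (wordProd_apply_le hu hv l)

theorem levelMax_two_mul_add_one {u v : ℕ} (hu : 1 ≤ u) (hv : 1 ≤ v) (n : ℕ) :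
    (levelMax u v (2 * n + 1) : ℝ) =
      √(max u v : ℕ) / √(min u v : ℕ) * shearFib (√u * √v) (2 * n + 2) :=
  le_antisymm (levelMax_le hu hv _) (sqrt_div_sqrt_mul_shearFib_le_levelMax hu hv n)

theorem stmt0 (u v : ℕ) (hu : 1 ≤ u) (hv : 1 ≤ v) (n : ℕ)
    (s t : ℕ) (hs : s = min u v) (ht : t = max u v)
    (qp qm : ℝ)
    (hqp : qp = 2 + (u : ℝ) * v + Real.sqrt ((u : ℝ) * v * (4 + (u : ℝ) * v)))
    (hqm : qm = 2 + (u : ℝ) * v - Real.sqrt ((u : ℝ) * v * (4 + (u : ℝ) * v))) :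
    (levelMax u v (2 * n + 1) : ℝ) =
      Real.sqrt t * (qp ^ (n + 1) - qm ^ (n + 1)) /
        (2 ^ (n + 1) * Real.sqrt ((s : ℝ) * (4 + (u : ℝ) * v))) := by
  subst hs ht hqp hqm
  rw [levelMax_two_mul_add_one hu hv, ← sqrt_mul (Nat.cast_nonneg u),
    show 2 * n + 2 = 2 * (n + 1) by ring, shearFib_sqrt_two_mul (by positivity),
    sqrt_mul (Nat.cast_nonneg _)]
  ring
end

section
/- For every positive integer u and every natural number n, the (1,1) entry of the matrix (L_u R_1)^n L_u equals F_n(u) = Σ_{i=0}^{n} C(2n−i, i)·u^{n−i} and the (2,1) entry equals G_n(u) = Σ_{i=0}^{n} C(2n+1−i, i)·u^{n+1−i}. -/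
open Matrix Finset

/-! The first column `(a, c)` of `(L_u R_1)^n L_u` obeys `a' = a + c`, `c' = u a + (u + 1) c`, so it
suffices that `F_{n+1} = F_n + G_n` and `G_{n+1} = u F_{n+1} + G_n`. Both are Pascal's rule for the
shallow-diagonal sums `∑ C(m - i, i) u^(e - i)`, which satisfy a Fibonacci-type recurrence in `m`;
`F_n` and `G_n` are the sums for `m = 2n` and `m = 2n + 1`. -/

def diagSum (u m e k : ℕ) : ℕ := ∑ i ∈ range k, (m - i).choose i * u ^ (e - i)

def fPoly (u n : ℕ) : ℕ := diagSum u (2 * n) n (n + 1)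

def gPoly (u n : ℕ) : ℕ := diagSum u (2 * n + 1) (n + 1) (n + 1)

theorem diagSum_pascal (u m e : ℕ) {k : ℕ} (hk : k ≤ m + 1) :
    diagSum u (m + 2) (e + 1) (k + 1) = diagSum u (m + 1) (e + 1) (k + 1) + diagSum u m e k := by
  have hsplit : ∀ i ∈ range k, (m + 2 - (i + 1)).choose (i + 1) * u ^ (e + 1 - (i + 1)) =
      (m + 1 - (i + 1)).choose (i + 1) * u ^ (e + 1 - (i + 1)) + (m - i).choose i * u ^ (e - i) := by
    intro i hi
    have hm : m + 2 - (i + 1) = m - i + 1 := by grind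
    have hm' : m + 1 - (i + 1) = m - i := by omega
    rw [hm, hm', Nat.choose_succ_succ', Nat.add_sub_add_right, add_mul, add_comm]
  simp only [diagSum, sum_range_succ' _ k, sum_congr rfl hsplit, sum_add_distrib]
  simp only [Nat.sub_zero, Nat.choose_zero_right]
  ring

theorem diagSum_exp_succ (u m e : ℕ) {k : ℕ} (hk : k ≤ e + 1) :
    diagSum u m (e + 1) k = u * diagSum u m e k := by
  rw [diagSum, diagSum, mul_sum]
  refine sum_congr rfl fun i hi => ?_
  rw [Nat.sub_add_comm (by grind), pow_succ]
  ring

theorem diagSum_range_succ_of_lt (u m e : ℕ) {k : ℕ} (hk : m < 2 * k) :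
    diagSum u m e (k + 1) = diagSum u m e k := by
  rw [diagSum, sum_range_succ, Nat.choose_eq_zero_of_lt (by omega), zero_mul, add_zero, diagSum]

theorem fPoly_succ (u n : ℕ) : fPoly u (n + 1) = fPoly u n + gPoly u n := by
  have h := diagSum_pascal u (2 * n) n (k := n + 1) (by omega)
  rw [diagSum_range_succ_of_lt u (2 * n + 1) (n + 1) (by omega)] at h
  rw [fPoly, fPoly, gPoly]
  exact h.trans (add_comm _ _)

theorem gPoly_succ (u n : ℕ) : gPoly u (n + 1) = u * fPoly u (n + 1) + gPoly u n := by
  have h := diagSum_pascal u (2 * n + 1) (n + 1) (k := n + 1) (by omega)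
  rw [diagSum_exp_succ u (2 * n + 2) (n + 1) le_rfl] at h
  exact h

theorem Lm_mul_Rm_one_mul_apply (u : ℕ) (A : Matrix (Fin 2) (Fin 2) ℕ) (j : Fin 2) :
    (Lm u * Rm 1 * A) 0 j = A 0 j + A 1 j ∧ (Lm u * Rm 1 * A) 1 j = u * A 0 j + (u + 1) * A 1 j := by
  simp [Lm, Rm, mul_apply, Fin.sum_univ_two]

theorem stmt11_general (u : ℕ) (n : ℕ) :
    ((Lm u * Rm 1) ^ n * Lm u) 0 0 =
      ∑ i ∈ Finset.range (n + 1), (2 * n - i).choose i * u ^ (n - i) ∧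
    ((Lm u * Rm 1) ^ n * Lm u) 1 0 =
      ∑ i ∈ Finset.range (n + 1), (2 * n + 1 - i).choose i * u ^ (n + 1 - i) := by
  change _ = fPoly u n ∧ _ = gPoly u n
  induction n with
  | zero => simp [fPoly, gPoly, diagSum, Lm]
  | succ n ih =>
    obtain ⟨ha, hc⟩ := ih
    obtain ⟨ha', hc'⟩ := Lm_mul_Rm_one_mul_apply u ((Lm u * Rm 1) ^ n * Lm u) 0
    rw [pow_succ', Matrix.mul_assoc, ha', hc', ha, hc, fPoly_succ, gPoly_succ, fPoly_succ]
    constructor <;> ring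

theorem stmt11 (u : ℕ) (hu : 1 ≤ u) (n : ℕ) :
    ((Lm u * Rm 1) ^ n * Lm u) 0 0 =
      ∑ i ∈ Finset.range (n + 1), (2 * n - i).choose i * u ^ (n - i) ∧
    ((Lm u * Rm 1) ^ n * Lm u) 1 0 =
      ∑ i ∈ Finset.range (n + 1), (2 * n + 1 - i).choose i * u ^ (n + 1 - i) :=
  stmt11_general u n
end

section
/- For every positive integer u and every integer n ≥ 1, the (1,1) entry of the matrix (R_1 L_u)^n L_u equals H_n(u) = Σ_{i=0}^{n} (C(2n−i, i) + C(2n−1−i, i))·u^{n−i} and the (2,1) entry equals I_n(u) = Σ_{i=0}^{n−1} (C(2n−1−i, i) + C(2n−2−i, i))·u^{n−i}. -/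
open Matrix Finset

/-!
Write `D(m, k) = ∑_{i ≤ k} C(m - i, i) u^(k - i)`. Pascal's rule gives
`D(m + 2, k + 1) = D(m + 1, k + 1) + D(m, k)`, and `D(m, k + 1) = u D(m, k)` as soon as `m ≤ 2k + 1`.
The first column `(h, i)` of `(R₁ L_u)^n L_u` evolves by `h ↦ (1 + u) h + i`, `i ↦ u h + i`, and these
two rules show that `H_n = D(2n, n) + D(2n - 1, n)` and `I_n = D(2n - 1, n) + D(2n - 2, n)` obey the
same recursion from `n = 1` on.
-/

def diagChooseSum (u m k : ℕ) : ℕ :=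
  ∑ i ∈ range (k + 1), (m - i).choose i * u ^ (k - i)

-- Also for `i > m`, where truncated subtraction makes both sides vanish.
lemma choose_add_two_sub_succ (m i : ℕ) :
    (m + 2 - (i + 1)).choose (i + 1) = (m + 1 - (i + 1)).choose (i + 1) + (m - i).choose i := by
  rcases le_or_gt i m with him | hmi
  · rw [show m + 2 - (i + 1) = m - i + 1 by omega, show m + 1 - (i + 1) = m - i by omega,
      Nat.choose_succ_succ', add_comm]
  · rw [Nat.choose_eq_zero_of_lt (by omega), Nat.choose_eq_zero_of_lt (by omega),
      Nat.choose_eq_zero_of_lt (by omega)]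

namespace diagChooseSum

variable (u : ℕ)

lemma add_two (m k : ℕ) :
    diagChooseSum u (m + 2) (k + 1) = diagChooseSum u (m + 1) (k + 1) + diagChooseSum u m k := by
  simp only [diagChooseSum]
  rw [sum_range_succ', sum_range_succ' _ (k + 1)]
  simp only [choose_add_two_sub_succ, add_mul, sum_add_distrib, Nat.choose_zero_right,
    Nat.add_sub_add_right]
  ring

lemma succ_of_le {m k : ℕ} (h : m ≤ 2 * k + 1) :
    diagChooseSum u m (k + 1) = u * diagChooseSum u m k := by
  rw [diagChooseSum, sum_range_succ, Nat.choose_eq_zero_of_lt (by omega), zero_mul, add_zero,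
    diagChooseSum, mul_sum]
  refine sum_congr rfl fun i hi => ?_
  rw [show k + 1 - i = k - i + 1 by have := mem_range.1 hi; omega, pow_succ]
  ring

end diagChooseSum

lemma Rm_one_mul_Lm_mul_apply_zero_zero (u : ℕ) (N : Matrix (Fin 2) (Fin 2) ℕ) :
    (Rm 1 * Lm u * N) 0 0 = (1 + u) * N 0 0 + N 1 0 := by
  simp [Rm, Lm, Matrix.mul_apply, Fin.sum_univ_two]

lemma Rm_one_mul_Lm_mul_apply_one_zero (u : ℕ) (N : Matrix (Fin 2) (Fin 2) ℕ) :
    (Rm 1 * Lm u * N) 1 0 = u * N 0 0 + N 1 0 := by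
  simp [Rm, Lm, Matrix.mul_apply, Fin.sum_univ_two]

open diagChooseSum in
lemma Rm_one_mul_Lm_pow_succ_mul_Lm_col_zero (u n : ℕ) :
    ((Rm 1 * Lm u) ^ (n + 1) * Lm u) 0 0 =
        diagChooseSum u (2 * n + 2) (n + 1) + diagChooseSum u (2 * n + 1) (n + 1) ∧
      ((Rm 1 * Lm u) ^ (n + 1) * Lm u) 1 0 =
        diagChooseSum u (2 * n + 1) (n + 1) + diagChooseSum u (2 * n) (n + 1) := by
  induction n with
  | zero =>
    simp [diagChooseSum, Rm, Lm, Matrix.mul_apply, Fin.sum_univ_two, sum_range_succ, add_comm]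
  | succ n ih =>
    obtain ⟨ih₀, ih₁⟩ := ih
    rw [pow_succ', mul_assoc, Rm_one_mul_Lm_mul_apply_zero_zero, Rm_one_mul_Lm_mul_apply_one_zero,
      ih₀, ih₁]
    have e₁ : diagChooseSum u (2 * (n + 1) + 2) (n + 1 + 1) =
        diagChooseSum u (2 * (n + 1) + 1) (n + 1 + 1) + diagChooseSum u (2 * n + 2) (n + 1) :=
      add_two u _ _
    have e₂ : diagChooseSum u (2 * (n + 1) + 1) (n + 1 + 1) =
        diagChooseSum u (2 * (n + 1)) (n + 1 + 1) + diagChooseSum u (2 * n + 1) (n + 1) :=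
      add_two u _ _
    have e₃ : diagChooseSum u (2 * n + 2) (n + 1) =
        diagChooseSum u (2 * n + 1) (n + 1) + diagChooseSum u (2 * n) n :=
      add_two u _ _
    have e₄ : diagChooseSum u (2 * (n + 1)) (n + 1 + 1) = u * diagChooseSum u (2 * n + 2) (n + 1) :=
      succ_of_le u (by omega)
    have e₅ : diagChooseSum u (2 * n) (n + 1) = u * diagChooseSum u (2 * n) n :=
      succ_of_le u (by omega)
    constructor
    · rw [e₁, e₂, e₄, e₃, e₅]; ring
    · rw [e₂, e₄, e₃, e₅]; ring

theorem stmt12_general (u : ℕ) (n : ℕ) (hn : 1 ≤ n) :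
    ((Rm 1 * Lm u) ^ n * Lm u) 0 0 =
      ∑ i ∈ Finset.range (n + 1),
        ((2 * n - i).choose i + (2 * n - 1 - i).choose i) * u ^ (n - i) ∧
    ((Rm 1 * Lm u) ^ n * Lm u) 1 0 =
      ∑ i ∈ Finset.range n,
        ((2 * n - 1 - i).choose i + (2 * n - 2 - i).choose i) * u ^ (n - i) := by
  obtain ⟨k, rfl⟩ : ∃ k, n = k + 1 := ⟨n - 1, by omega⟩
  obtain ⟨h₀, h₁⟩ := Rm_one_mul_Lm_pow_succ_mul_Lm_col_zero u k
  refine ⟨h₀.trans ?_, h₁.trans ?_⟩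
  · rw [diagChooseSum, diagChooseSum, ← sum_add_distrib]
    refine sum_congr rfl fun i _ => ?_
    rw [add_mul, show 2 * (k + 1) = 2 * k + 2 by ring, show 2 * k + 2 - 1 = 2 * k + 1 by omega]
  · rw [diagChooseSum, diagChooseSum, ← sum_add_distrib, sum_range_succ,
      Nat.choose_eq_zero_of_lt (by omega), Nat.choose_eq_zero_of_lt (by omega), zero_mul,
      add_zero, add_zero]
    refine sum_congr rfl fun i _ => ?_
    rw [add_mul, show 2 * (k + 1) - 1 = 2 * k + 1 by omega, show 2 * (k + 1) - 2 = 2 * k by omega]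

theorem stmt12 (u : ℕ) (hu : 1 ≤ u) (n : ℕ) (hn : 1 ≤ n) :
    ((Rm 1 * Lm u) ^ n * Lm u) 0 0 =
      ∑ i ∈ Finset.range (n + 1),
        ((2 * n - i).choose i + (2 * n - 1 - i).choose i) * u ^ (n - i) ∧
    ((Rm 1 * Lm u) ^ n * Lm u) 1 0 =
      ∑ i ∈ Finset.range n,
        ((2 * n - 1 - i).choose i + (2 * n - 2 - i).choose i) * u ^ (n - i) :=
  stmt12_general u n hn
end

section
/- For every integer n ≥ 1, in the dominance order: 2x·H_n(x) + I_n(x) ≼ G_{n+1}(x) and F_n(x) + 2·G_n(x) ≼ H_{n+1}(x); moreover x·F_n(x) + G_n(x) = I_{n+1}(x) as polynomials. -/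
open Polynomial in
/-- The tail sum Σ_{k ≥ N} of the coefficients of a polynomial over ℕ. -/
def tailSum (f : Polynomial ℕ) (N : ℕ) : ℕ :=
  ∑ k ∈ f.support.filter (fun k => N ≤ k), f.coeff k

/-- The dominance order on polynomials over ℕ: `domRel f g` means f ≽ g,
    i.e. every tail sum of coefficients of f is at least that of g. -/
def domRel (f g : Polynomial ℕ) : Prop :=
  ∀ N : ℕ, tailSum g N ≤ tailSum f N

open Polynomial

/-- F_n(x) = Σ_{i=0}^{n} C(2n−i, i)·x^{n−i}. -/
noncomputable def Fpoly (n : ℕ) : Polynomial ℕ :=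
  ∑ i ∈ Finset.range (n + 1), C ((2 * n - i).choose i) * X ^ (n - i)

/-- G_n(x) = Σ_{i=0}^{n} C(2n+1−i, i)·x^{n+1−i}. -/
noncomputable def Gpoly (n : ℕ) : Polynomial ℕ :=
  ∑ i ∈ Finset.range (n + 1), C ((2 * n + 1 - i).choose i) * X ^ (n + 1 - i)

/-- H_n(x) = Σ_{i=0}^{n} (C(2n−i, i) + C(2n−1−i, i))·x^{n−i}. -/
noncomputable def Hpoly (n : ℕ) : Polynomial ℕ :=
  ∑ i ∈ Finset.range (n + 1), C ((2 * n - i).choose i + (2 * n - 1 - i).choose i) * X ^ (n - i)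

/-- I_n(x) = Σ_{i=0}^{n−1} (C(2n−1−i, i) + C(2n−2−i, i))·x^{n−i}. -/
noncomputable def Ipoly (n : ℕ) : Polynomial ℕ :=
  ∑ i ∈ Finset.range n, C ((2 * n - 1 - i).choose i + (2 * n - 2 - i).choose i) * X ^ (n - i)

/-!
Reading off coefficients, `F_n = Σ_k C(n+k, 2k) x^k` and `G_n = Σ_k C(n+k+1, 2k+1) x^(k+1)`, so
Pascal's rule gives `F_{n+1} = F_n + G_n` and `G_{n+1} = x F_{n+1} + G_n`, while the definitions
give `H_{n+1} = F_{n+1} + G_n` and `I_{n+1} = x F_n + G_n` directly. The second and third claims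
are then identities, and for `n ≥ 1` the first follows from
`G_{n+1} + x F_n = (2x H_n + I_n) + x (x F_n)`, because multiplying by `x` does not decrease any
tail sum of coefficients.
-/

namespace Polynomial

lemma coeff_sum_range_C_mul_X_pow_sub {R : Type*} [Semiring R] (c : ℕ → R) (n k : ℕ) :
    (∑ i ∈ Finset.range (n + 1), C (c i) * X ^ (n - i)).coeff k =
      if k ≤ n then c (n - k) else 0 := by
  simp only [finsetSum_coeff, coeff_C_mul_X_pow]
  split_ifs with hk
  · rw [Finset.sum_eq_single (n - k)]
    · rw [if_pos (by omega)]
    · intro i hi hik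
      rw [if_neg (by simp only [Finset.mem_range] at hi; omega)]
    · simp only [Finset.mem_range]; omega
  · exact Finset.sum_eq_zero fun i _ => if_neg (by omega)

end Polynomial

lemma coeff_Fpoly (n k : ℕ) : (Fpoly n).coeff k = (n + k).choose (2 * k) := by
  rw [Fpoly, coeff_sum_range_C_mul_X_pow_sub]
  split_ifs with hk
  · rw [show 2 * n - (n - k) = n + k by omega]
    exact Nat.choose_symm_of_eq_add (by omega)
  · exact (Nat.choose_eq_zero_of_lt (by omega)).symm

lemma Gpoly_eq_X_mul (n : ℕ) :
    Gpoly n = X * ∑ i ∈ Finset.range (n + 1), C ((2 * n + 1 - i).choose i) * X ^ (n - i) := by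
  rw [Gpoly, Finset.mul_sum]
  refine Finset.sum_congr rfl fun i hi => ?_
  rw [Finset.mem_range] at hi
  rw [show n + 1 - i = n - i + 1 by omega, pow_succ']
  ring

lemma coeff_Gpoly_zero (n : ℕ) : (Gpoly n).coeff 0 = 0 := by
  rw [Gpoly_eq_X_mul, coeff_X_mul_zero]

lemma coeff_Gpoly_succ (n k : ℕ) : (Gpoly n).coeff (k + 1) = (n + k + 1).choose (2 * k + 1) := by
  rw [Gpoly_eq_X_mul, coeff_X_mul, coeff_sum_range_C_mul_X_pow_sub]
  split_ifs with hk
  · rw [show 2 * n + 1 - (n - k) = n + k + 1 by omega]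
    exact Nat.choose_symm_of_eq_add (by omega)
  · exact (Nat.choose_eq_zero_of_lt (by omega)).symm

lemma Fpoly_succ (n : ℕ) : Fpoly (n + 1) = Fpoly n + Gpoly n := by
  ext (_ | k)
  · simp only [coeff_add, coeff_Fpoly, coeff_Gpoly_zero, mul_zero, Nat.choose_zero_right]
  · simp only [coeff_add, coeff_Fpoly, coeff_Gpoly_succ]
    rw [show n + 1 + (k + 1) = n + k + 1 + 1 by ring, show 2 * (k + 1) = 2 * k + 1 + 1 by ring,
      Nat.choose_succ_succ' (n + k + 1)]
    ring_nf

lemma Gpoly_succ (n : ℕ) : Gpoly (n + 1) = X * Fpoly (n + 1) + Gpoly n := by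
  ext (_ | k)
  · simp only [coeff_add, coeff_Gpoly_zero, coeff_X_mul_zero]
  · simp only [coeff_add, coeff_X_mul, coeff_Fpoly, coeff_Gpoly_succ]
    rw [show n + 1 + k + 1 = n + k + 1 + 1 by ring, Nat.choose_succ_succ']
    ring_nf

lemma Hpoly_succ (n : ℕ) : Hpoly (n + 1) = Fpoly (n + 1) + Gpoly n := by
  have hlast : (2 * (n + 1) - 1 - (n + 1)).choose (n + 1) = 0 := Nat.choose_eq_zero_of_lt (by omega)
  simp only [Hpoly, Fpoly, Gpoly, C_add, add_mul, Finset.sum_add_distrib]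
  rw [Finset.sum_range_succ (fun i => C ((2 * (n + 1) - 1 - i).choose i) * _), hlast, C_0,
    zero_mul, add_zero]
  congr 1

lemma Ipoly_succ (n : ℕ) : Ipoly (n + 1) = X * Fpoly n + Gpoly n := by
  rw [add_comm (X * _), Ipoly, Fpoly, Gpoly, Finset.mul_sum, ← Finset.sum_add_distrib]
  refine Finset.sum_congr rfl fun i hi => ?_
  rw [Finset.mem_range] at hi
  rw [show 2 * (n + 1) - 1 - i = 2 * n + 1 - i by omega,
    show 2 * (n + 1) - 2 - i = 2 * n - i by omega, show n + 1 - i = n - i + 1 by omega, C_add,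
    pow_succ']
  ring

lemma Gpoly_add_two_add_X_mul_Fpoly (n : ℕ) :
    Gpoly (n + 2) + X * Fpoly (n + 1) =
      (C 2 * X * Hpoly (n + 1) + Ipoly (n + 1)) + X * (X * Fpoly (n + 1)) := by
  rw [Hpoly_succ, Ipoly_succ, Gpoly_succ (n + 1), Fpoly_succ (n + 1), Gpoly_succ n, Fpoly_succ n,
    C_ofNat]
  ring

lemma tailSum_eq_sum_range (f : ℕ[X]) (N : ℕ) {M : ℕ} (hM : f.natDegree < M) :
    tailSum f N = ∑ k ∈ Finset.range M, if N ≤ k then f.coeff k else 0 := by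
  rw [tailSum, Finset.sum_filter]
  exact f.sum_over_range' (f := fun k a => if N ≤ k then a else 0) (fun _ => ite_self 0) M hM

lemma tailSum_add (f g : ℕ[X]) (N : ℕ) : tailSum (f + g) N = tailSum f N + tailSum g N := by
  set M := max (f + g).natDegree (max f.natDegree g.natDegree) + 1
  rw [tailSum_eq_sum_range (f + g) N (M := M) (by omega),
    tailSum_eq_sum_range f N (M := M) (by omega), tailSum_eq_sum_range g N (M := M) (by omega),
    ← Finset.sum_add_distrib]
  refine Finset.sum_congr rfl fun k _ => ?_
  split_ifs <;> simp only [coeff_add, add_zero]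

lemma tailSum_le_tailSum_X_mul (f : ℕ[X]) (N : ℕ) : tailSum f N ≤ tailSum (X * f) N := by
  have hdeg : (X * f).natDegree < f.natDegree + 1 + 1 :=
    natDegree_mul_le.trans_lt (by rw [natDegree_X]; omega)
  rw [tailSum_eq_sum_range f N (lt_add_one _), tailSum_eq_sum_range _ N hdeg,
    Finset.sum_range_succ' _ (f.natDegree + 1)]
  simp only [coeff_X_mul, coeff_X_mul_zero, ite_self, add_zero]
  exact Finset.sum_le_sum fun k _ => by split_ifs <;> omega

lemma domRel_of_add_eq_add_X_mul {f g : ℕ[X]} (h : ℕ[X]) (hfg : f + h = g + X * h) :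
    domRel f g := by
  intro N
  have hN := congrArg (tailSum · N) hfg
  simp only [tailSum_add] at hN
  have := tailSum_le_tailSum_X_mul h N
  omega

theorem stmt14 (n : ℕ) (hn : 1 ≤ n) :
    domRel (Gpoly (n + 1)) (C 2 * X * Hpoly n + Ipoly n) ∧
    domRel (Hpoly (n + 1)) (Fpoly n + C 2 * Gpoly n) ∧
    X * Fpoly n + Gpoly n = Ipoly (n + 1) := by
  refine ⟨?_, ?_, (Ipoly_succ n).symm⟩
  · obtain ⟨m, rfl⟩ := Nat.exists_eq_add_of_le' hn
    exact domRel_of_add_eq_add_X_mul _ (Gpoly_add_two_add_X_mul_Fpoly m)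
  · have hH : Hpoly (n + 1) = Fpoly n + C 2 * Gpoly n := by
      rw [Hpoly_succ, Fpoly_succ, C_ofNat]
      ring
    rw [hH]
    exact fun _ => le_rfl
end

section
/- Let u be a positive integer and n a natural number. For every matrix M ∈ 𝒯^{(u,1)}(2n+1) with (1,1) entry a and (2,1) entry c, one has max{a, c} ≤ G_n(u) and a + c ≤ F_n(u) + G_n(u), where F_n(u) = Σ_{i=0}^{n} C(2n−i, i)·u^{n−i} and G_n(u) = Σ_{i=0}^{n} C(2n+1−i, i)·u^{n+1−i}. -/
open Matrix Finset

/-!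
Only the first column `(a, c)` of a product matters: multiplying on the left by `L_u` sends it to
`(a, u a + c)`, by `R_1` to `(a + c, c)`. After `2n+1` letters it lies in the region
`c ≤ G, u a + c ≤ u F + G, a + u F ≤ F + G` with `F = F_n(u)`, `G = G_n(u)`, whose corner `(F, G)`
is the column of the alternating word `L R L ⋯ R L`. Two more letters map this region into the
one for `(F + G, u (F + G) + G)`, and Pascal's rule shows that this is exactly the step
`(F_n, G_n) ↦ (F_{n+1}, G_{n+1})`. For `u ≥ 1` the region lies inside `max a c ≤ G` and
`a + c ≤ F + G`.
-/

namespace CalkinWilf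

variable {u n : ℕ}

def F (u n : ℕ) : ℕ := ∑ i ∈ range (n + 1), (2 * n - i).choose i * u ^ (n - i)

def G (u n : ℕ) : ℕ := ∑ i ∈ range (n + 1), (2 * n + 1 - i).choose i * u ^ (n + 1 - i)

@[simp] lemma F_zero : F u 0 = 1 := by simp [F]

@[simp] lemma G_zero : G u 0 = u := by simp [G]

lemma G_eq_sum_range_add_pow : G u n =
    ∑ i ∈ range n, (2 * n - i).choose (i + 1) * u ^ (n - i) + u ^ (n + 1) := by
  rw [G, sum_range_succ']
  simp [Nat.add_sub_add_right]

lemma F_succ_eq_sum_range_add_pow : F u (n + 1) =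
    ∑ i ∈ range (n + 1), (2 * n + 1 - i).choose (i + 1) * u ^ (n - i) + u ^ (n + 1) := by
  rw [F, sum_range_succ']
  simp [Nat.add_sub_add_right, show 2 * (n + 1) = 2 * n + 1 + 1 by ring]

lemma F_succ : F u (n + 1) = F u n + G u n := by
  have pascal : ∀ i ∈ range (n + 1), (2 * n + 1 - i).choose (i + 1) * u ^ (n - i)
      = (2 * n - i).choose i * u ^ (n - i) + (2 * n - i).choose (i + 1) * u ^ (n - i) := by
    intro i hi
    rw [show 2 * n + 1 - i = 2 * n - i + 1 by grind, Nat.choose_succ_succ', add_mul]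
  rw [F_succ_eq_sum_range_add_pow, sum_congr rfl pascal, sum_add_distrib,
    sum_range_succ (fun i => (2 * n - i).choose (i + 1) * u ^ (n - i)),
    Nat.choose_eq_zero_of_lt (by omega : 2 * n - n < n + 1), G_eq_sum_range_add_pow, F]
  ring

lemma G_succ : G u (n + 1) = u * F u (n + 1) + G u n := by
  have pascal : ∀ i ∈ range (n + 1),
      (2 * (n + 1) + 1 - (i + 1)).choose (i + 1) * u ^ (n + 1 + 1 - (i + 1))
        = (2 * n + 1 - i).choose i * u ^ (n + 1 - i)
          + u * ((2 * n + 1 - i).choose (i + 1) * u ^ (n - i)) := by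
    intro i hi
    rw [show 2 * (n + 1) + 1 - (i + 1) = 2 * n + 1 - i + 1 by grind, Nat.choose_succ_succ',
      Nat.add_sub_add_right, show n + 1 - i = n - i + 1 by grind, pow_succ]
    ring
  rw [G, sum_range_succ', sum_congr rfl pascal, sum_add_distrib, ← mul_sum,
    F_succ_eq_sum_range_add_pow, G]
  simp only [Nat.sub_zero, Nat.choose_zero_right, one_mul]
  ring

lemma wordProd_cons (u v : ℕ) (b : Bool) (w : List Bool) :
    wordProd u v (b :: w) = (if b then Rm v else Lm u) * wordProd u v w := by
  simp [wordProd]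

section FirstColumn

variable (M : Matrix (Fin 2) (Fin 2) ℕ)

@[simp] lemma Lm_mul_apply_zero_zero : (Lm u * M) 0 0 = M 0 0 := by
  simp [Lm, Matrix.mul_apply]

@[simp] lemma Lm_mul_apply_one_zero : (Lm u * M) 1 0 = u * M 0 0 + M 1 0 := by
  simp [Lm, Matrix.mul_apply]

@[simp] lemma Rm_mul_apply_zero_zero (v : ℕ) : (Rm v * M) 0 0 = M 0 0 + v * M 1 0 := by
  simp [Rm, Matrix.mul_apply]

@[simp] lemma Rm_mul_apply_one_zero (v : ℕ) : (Rm v * M) 1 0 = M 1 0 := by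
  simp [Rm, Matrix.mul_apply]

end FirstColumn

structure OddBound (u F G : ℕ) (M : Matrix (Fin 2) (Fin 2) ℕ) : Prop where
  snd_le : M 1 0 ≤ G
  mul_fst_add_snd_le : u * M 0 0 + M 1 0 ≤ u * F + G
  fst_add_mul_le : M 0 0 + u * F ≤ F + G

namespace OddBound

variable {F G : ℕ} {M : Matrix (Fin 2) (Fin 2) ℕ}

lemma fst_le (hu : 1 ≤ u) (h : OddBound u F G M) : M 0 0 ≤ G := by
  nlinarith [h.fst_add_mul_le]

lemma fst_add_snd_le (hu : 1 ≤ u) (h : OddBound u F G M) : M 0 0 + M 1 0 ≤ F + G := by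
  rcases le_total (M 0 0) F with ha | ha
  · linarith [h.snd_le]
  · nlinarith [h.mul_fst_add_snd_le]

lemma letter_mul_letter_mul (hu : 1 ≤ u) (h : OddBound u F G M) (x y : Bool) :
    OddBound u (F + G) (u * (F + G) + G)
      ((if x then Rm 1 else Lm u) * ((if y then Rm 1 else Lm u) * M)) := by
  have h₁ := h.snd_le
  have h₂ := h.mul_fst_add_snd_le
  have h₃ := h.fst_add_mul_le
  have ha := h.fst_le hu
  have hac := h.fst_add_snd_le hu
  cases x <;> cases y <;> constructor <;>
    simp only [Bool.false_eq_true, if_true, if_false, Lm_mul_apply_zero_zero, Lm_mul_apply_one_zero,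
      Rm_mul_apply_zero_zero, Rm_mul_apply_one_zero] <;>
    nlinarith

end OddBound

theorem oddBound_wordProd (hu : 1 ≤ u) :
    ∀ w : List Bool, w.length = 2 * n + 1 → OddBound u (F u n) (G u n) (wordProd u 1 w) := by
  induction n with
  | zero =>
    rintro (_ | ⟨b, _ | _⟩) hw <;> simp at hw
    cases b <;> constructor <;> simp [wordProd, Lm, Rm]
  | succ n ih =>
    rintro (_ | ⟨x, _ | ⟨y, w⟩⟩) hw <;> simp at hw
    rw [wordProd_cons, wordProd_cons, G_succ, F_succ]
    exact (ih w (by omega)).letter_mul_letter_mul hu x y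

end CalkinWilf

theorem stmt15 (u : ℕ) (hu : 1 ≤ u) (n : ℕ)
    (w : List Bool) (hw : w.length = 2 * n + 1)
    (M : Matrix (Fin 2) (Fin 2) ℕ) (hM : M = wordProd u 1 w) :
    max (M 0 0) (M 1 0) ≤
      ∑ i ∈ Finset.range (n + 1), (2 * n + 1 - i).choose i * u ^ (n + 1 - i) ∧
    M 0 0 + M 1 0 ≤
      (∑ i ∈ Finset.range (n + 1), (2 * n - i).choose i * u ^ (n - i)) +
        ∑ i ∈ Finset.range (n + 1), (2 * n + 1 - i).choose i * u ^ (n + 1 - i) := by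
  have h : CalkinWilf.OddBound u (CalkinWilf.F u n) (CalkinWilf.G u n) M :=
    hM ▸ CalkinWilf.oddBound_wordProd hu w hw
  exact ⟨max_le (h.fst_le hu) h.snd_le, h.fst_add_snd_le hu⟩
end

section
/- For every natural number n and every word w ∈ {0,1}^n there exist polynomials p₁, p₂, p₃, p₄ in one variable with natural number coefficients such that for all positive integers u and v, M_{u,v}(w) = [[p₁(uv), v·p₂(uv)], [u·p₃(uv), p₄(uv)]]; moreover 2·deg p₁ ≤ n and 2·deg p₄ ≤ n, and if p₂ ≠ 0 then 2·deg p₂ + 1 ≤ n, and if p₃ ≠ 0 then 2·deg p₃ + 1 ≤ n (so each entry, viewed as a polynomial in u and v, has total degree at most n). -/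
open Matrix Finset

/-!
Write the four entries of `M_{u,v}(w)` as `p₁(uv), v p₂(uv), u p₃(uv), p₄(uv)`. Multiplying on
the left by `L_u` or `R_v` keeps this shape: for `L_u` the new quadruple is
`(p₁, p₂, p₁ + p₃, X p₂ + p₄)`, for `R_v` it is `(p₁ + X p₃, p₂ + p₄, p₃, p₄)`. Giving the monomial
`(uv)^i` weight `2i` and the factors `u`, `v` weight `1`, each step raises every weighted degree
by at most one, which yields the degree bounds by induction on the word.
-/

open Polynomial

section TotalDegree

variable {R : Type*} [Semiring R]

/-- `u^k p(uv)` (equivalently `v^k p(uv)`) has total degree at most `n` in `u` and `v`. -/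
def TotalDegreeLE (k n : ℕ) (p : R[X]) : Prop :=
  ∀ i, p.coeff i ≠ 0 → 2 * i + k ≤ n

variable {k k' n n' : ℕ} {p q : R[X]}

theorem totalDegreeLE_one : TotalDegreeLE 0 0 (1 : R[X]) := by
  intro i hi
  rw [coeff_one] at hi
  split_ifs at hi
  · omega
  · exact absurd rfl hi

theorem totalDegreeLE_zero : TotalDegreeLE k n (0 : R[X]) :=
  fun i hi => absurd (coeff_zero i) hi

theorem TotalDegreeLE.mono (h : TotalDegreeLE k n p) (hkn : k' + n ≤ k + n') :
    TotalDegreeLE k' n' p := by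
  intro i hi
  have := h i hi
  omega

theorem TotalDegreeLE.add (hp : TotalDegreeLE k n p) (hq : TotalDegreeLE k n q) :
    TotalDegreeLE k n (p + q) := by
  intro i hi
  by_cases hpi : p.coeff i = 0
  · rw [coeff_add, hpi, zero_add] at hi
    exact hq i hi
  · exact hp i hpi

theorem TotalDegreeLE.X_mul (h : TotalDegreeLE (k + 2) n p) : TotalDegreeLE k n (X * p) := by
  rintro (_ | i) hi
  · exact absurd (coeff_X_mul_zero p) hi
  · rw [coeff_X_mul] at hi
    have := h i hi
    omega

theorem TotalDegreeLE.natDegree_le (h : TotalDegreeLE k n p) (hp : p ≠ 0) :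
    2 * p.natDegree + k ≤ n :=
  h _ (by rwa [coeff_natDegree, leadingCoeff_ne_zero])

theorem TotalDegreeLE.two_mul_natDegree_le (h : TotalDegreeLE 0 n p) : 2 * p.natDegree ≤ n := by
  rcases eq_or_ne p 0 with rfl | hp
  · simp
  · exact h.natDegree_le hp

end TotalDegree

def twistedEval (u v : ℕ) (P : Matrix (Fin 2) (Fin 2) ℕ[X]) : Matrix (Fin 2) (Fin 2) ℕ :=
  !![(P 0 0).eval (u * v), v * (P 0 1).eval (u * v);
     u * (P 1 0).eval (u * v), (P 1 1).eval (u * v)]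

noncomputable def lStep (P : Matrix (Fin 2) (Fin 2) ℕ[X]) : Matrix (Fin 2) (Fin 2) ℕ[X] :=
  !![P 0 0, P 0 1; P 0 0 + P 1 0, X * P 0 1 + P 1 1]

noncomputable def rStep (P : Matrix (Fin 2) (Fin 2) ℕ[X]) : Matrix (Fin 2) (Fin 2) ℕ[X] :=
  !![P 0 0 + X * P 1 0, P 0 1 + P 1 1; P 1 0, P 1 1]

noncomputable def wordPolys : List Bool → Matrix (Fin 2) (Fin 2) ℕ[X]
  | [] => 1
  | false :: w => lStep (wordPolys w)
  | true :: w => rStep (wordPolys w)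

theorem twistedEval_one (u v : ℕ) : twistedEval u v 1 = 1 := by
  ext i j
  fin_cases i <;> fin_cases j <;> simp [twistedEval]

theorem Lm_mul_twistedEval (u v : ℕ) (P : Matrix (Fin 2) (Fin 2) ℕ[X]) :
    Lm u * twistedEval u v P = twistedEval u v (lStep P) := by
  ext i j
  fin_cases i <;> fin_cases j <;>
    simp [twistedEval, lStep, Lm, Matrix.mul_apply, Fin.sum_univ_two] <;> ring

theorem Rm_mul_twistedEval (u v : ℕ) (P : Matrix (Fin 2) (Fin 2) ℕ[X]) :
    Rm v * twistedEval u v P = twistedEval u v (rStep P) := by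
  ext i j
  fin_cases i <;> fin_cases j <;>
    simp [twistedEval, rStep, Rm, Matrix.mul_apply, Fin.sum_univ_two] <;> ring

theorem wordProd_eq_twistedEval (u v : ℕ) (w : List Bool) :
    wordProd u v w = twistedEval u v (wordPolys w) := by
  induction w with
  | nil => simp [wordProd, wordPolys, twistedEval_one]
  | cons b w ih =>
    have hcons : wordProd u v (b :: w) = (if b then Rm v else Lm u) * wordProd u v w := by
      simp [wordProd]
    cases b
    · rw [hcons, ih, if_neg Bool.false_ne_true, Lm_mul_twistedEval, wordPolys]
    · rw [hcons, ih, if_pos rfl, Rm_mul_twistedEval, wordPolys]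

def DegreeBounded (n : ℕ) (P : Matrix (Fin 2) (Fin 2) ℕ[X]) : Prop :=
  TotalDegreeLE 0 n (P 0 0) ∧ TotalDegreeLE 1 n (P 0 1) ∧
    TotalDegreeLE 1 n (P 1 0) ∧ TotalDegreeLE 0 n (P 1 1)

theorem DegreeBounded.lStep {n : ℕ} {P : Matrix (Fin 2) (Fin 2) ℕ[X]} (h : DegreeBounded n P) :
    DegreeBounded (n + 1) (lStep P) :=
  let ⟨h₁, h₂, h₃, h₄⟩ := h
  ⟨h₁.mono (by omega), h₂.mono (by omega), (h₁.mono (by omega)).add (h₃.mono (by omega)),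
    (h₂.mono (k' := 2) (by omega)).X_mul.add (h₄.mono (by omega))⟩

theorem DegreeBounded.rStep {n : ℕ} {P : Matrix (Fin 2) (Fin 2) ℕ[X]} (h : DegreeBounded n P) :
    DegreeBounded (n + 1) (rStep P) :=
  let ⟨h₁, h₂, h₃, h₄⟩ := h
  ⟨(h₁.mono (by omega)).add (h₃.mono (k' := 2) (by omega)).X_mul,
    (h₂.mono (by omega)).add (h₄.mono (by omega)), h₃.mono (by omega), h₄.mono (by omega)⟩

theorem degreeBounded_wordPolys : ∀ w : List Bool, DegreeBounded w.length (wordPolys w)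
  | [] => by
    refine ⟨?_, ?_, ?_, ?_⟩ <;> simp [wordPolys, totalDegreeLE_one, totalDegreeLE_zero]
  | false :: w => (degreeBounded_wordPolys w).lStep
  | true :: w => (degreeBounded_wordPolys w).rStep

theorem stmt16 (n : ℕ) (w : List Bool) (hw : w.length = n) :
    ∃ p₁ p₂ p₃ p₄ : Polynomial ℕ,
      (∀ u v : ℕ, 1 ≤ u → 1 ≤ v →
        wordProd u v w =
          !![p₁.eval (u * v), v * p₂.eval (u * v);
             u * p₃.eval (u * v), p₄.eval (u * v)]) ∧
      2 * p₁.natDegree ≤ n ∧ 2 * p₄.natDegree ≤ n ∧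
      (p₂ ≠ 0 → 2 * p₂.natDegree + 1 ≤ n) ∧
      (p₃ ≠ 0 → 2 * p₃.natDegree + 1 ≤ n) := by
  subst hw
  obtain ⟨h₁, h₂, h₃, h₄⟩ := degreeBounded_wordPolys w
  exact ⟨_, _, _, _, fun u v _ _ => wordProd_eq_twistedEval u v w,
    h₁.two_mul_natDegree_le, h₄.two_mul_natDegree_le, h₂.natDegree_le, h₃.natDegree_le⟩
end
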